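/- Assume: A_0 − Ã_0 is positive semidefinite; xᵀ A_0 x < ρ xᵀ A_1 x for every nonzero x ∈ ℝⁿ; and both B := A_0 − 2ρ A_1 + ρ² A_2 and B̃ := Ã_0 − 2ρ A_1 + ρ² A_2 are positive definite. Let ν_1 ≤ … ≤ ν_n and ν̃_1 ≤ … ≤ ν̃_n be the generalized eigenvalues, counted with multiplicity, of the pencils (A_0 − ρ A_1, B) and (Ã_0 − ρ A_1, B̃) respectively (i.e., there exist a B-orthonormal basis z_1, …, z_n with (A_0 − ρ A_1) z_k = ν_k B z_k and a B̃-orthonormal basis z̃_1, …, z̃_n with (Ã_0 − ρ A_1) z̃_k = ν̃_k B̃ z̃_k). Then all ν_k and ν̃_k are negative, ν̃_k ≤ ν_k for every k = 1, …, n, and consequently ρ − ρ/(1 − ν̃_k) ≥ ρ − ρ/(1 − ν_k) for every k. -/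

import Mathlib

open Matrix Finset

private lemma sum_dot' {n : ℕ} {ι : Type*} [Fintype ι] (f : ι → Fin n → ℝ) (y : Fin n → ℝ) :
    (∑ i, f i) ⬝ᵥ y = ∑ i, f i ⬝ᵥ y := by
  simp only [dotProduct, Finset.sum_apply, Finset.sum_mul]
  exact Finset.sum_comm

private lemma dot_sum' {n : ℕ} {ι : Type*} [Fintype ι] (y : Fin n → ℝ) (f : ι → Fin n → ℝ) :
    y ⬝ᵥ (∑ i, f i) = ∑ i, y ⬝ᵥ f i := by
  simp only [dotProduct, Finset.sum_apply, Finset.mul_sum]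
  exact Finset.sum_comm

private lemma quad_expand' {n : ℕ} {ι : Type*} [Fintype ι] (P : Matrix (Fin n) (Fin n) ℝ)
    (w : ι → Fin n → ℝ) (c : ι → ℝ) :
    (∑ i, c i • w i) ⬝ᵥ (P *ᵥ ∑ j, c j • w j) =
      ∑ i, ∑ j, c i * c j * (w i ⬝ᵥ (P *ᵥ w j)) := by
  have h1 : (P *ᵥ ∑ j, c j • w j) = ∑ j, c j • (P *ᵥ w j) := by
    simp only [← mulVecLin_apply, map_sum, LinearMap.map_smul]
  rw [h1, sum_dot']
  refine Finset.sum_congr rfl fun i _ => ?_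
  rw [smul_dotProduct, dot_sum', Finset.smul_sum]
  refine Finset.sum_congr rfl fun j _ => ?_
  rw [dotProduct_smul]
  simp [smul_eq_mul]; ring

/-- For a B-orthonormal eigenbasis, quadratic forms on spans diagonalize. -/
private lemma quad_diag {n : ℕ} {ι : Type*} [Fintype ι] [DecidableEq ι] {P B : Matrix (Fin n) (Fin n) ℝ}
    {μ : Fin n → ℝ} {w : Fin n → Fin n → ℝ}
    (horth : ∀ i j, w i ⬝ᵥ (B *ᵥ w j) = if i = j then (1 : ℝ) else 0)
    (heig : ∀ k, P *ᵥ w k = μ k • (B *ᵥ w k))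
    (e : ι → Fin n) (he : Function.Injective e) (c : ι → ℝ) :
    ((∑ i, c i • w (e i)) ⬝ᵥ (B *ᵥ ∑ j, c j • w (e j)) = ∑ i, c i ^ 2) ∧
    ((∑ i, c i • w (e i)) ⬝ᵥ (P *ᵥ ∑ j, c j • w (e j)) = ∑ i, μ (e i) * c i ^ 2) := by
  have hPentry : ∀ i j : ι, w (e i) ⬝ᵥ (P *ᵥ w (e j)) =
      if i = j then μ (e j) else 0 := by
    intro i j
    rw [heig, dotProduct_smul, horth, smul_eq_mul]
    by_cases hij : i = j
    · simp [hij]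
    · have : e i ≠ e j := fun hc => hij (he hc)
      simp [hij, this]
  have hBentry : ∀ i j : ι, w (e i) ⬝ᵥ (B *ᵥ w (e j)) = if i = j then (1:ℝ) else 0 := by
    intro i j
    rw [horth]
    by_cases hij : i = j
    · simp [hij]
    · have : e i ≠ e j := fun hc => hij (he hc)
      simp [hij, this]
  constructor
  · rw [quad_expand']
    refine Finset.sum_congr rfl fun i _ => ?_
    rw [Finset.sum_eq_single i]
    · rw [hBentry]; simp [pow_two]
    · intro j _ hj; rw [hBentry]; simp [Ne.symm hj]
    · simp
  · rw [quad_expand']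
    refine Finset.sum_congr rfl fun i _ => ?_
    rw [Finset.sum_eq_single i]
    · rw [hPentry]; simp [pow_two]; ring
    · intro j _ hj; rw [hPentry]; simp [Ne.symm hj]
    · simp

/-- Comparison of the generalized eigenvalues of the pencils
    `(A₀ − ρ A₁, B)` and `(Ã₀ − ρ A₁, B̃)`: all are negative,
    `ν̃_k ≤ ν_k`, and the corresponding Lehmann–Goerisch bounds compare. -/
theorem pencil_eigenvalue_comparison
    {n : ℕ} (A0 At0 A1 A2 : Matrix (Fin n) (Fin n) ℝ)
    (hA0 : A0.IsSymm) (hAt0 : At0.IsSymm) (hA1 : A1.IsSymm) (hA2 : A2.IsSymm)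
    (ρ : ℝ) (hρ : 0 < ρ)
    (hdiff : (A0 - At0).PosSemidef)
    (h : ∀ x : Fin n → ℝ, x ≠ 0 → x ⬝ᵥ (A0 *ᵥ x) < ρ * (x ⬝ᵥ (A1 *ᵥ x)))
    (B Bt : Matrix (Fin n) (Fin n) ℝ)
    (hB : B = A0 - (2 * ρ) • A1 + ρ ^ 2 • A2)
    (hBt : Bt = At0 - (2 * ρ) • A1 + ρ ^ 2 • A2)
    (hBpos : B.PosDef) (hBtpos : Bt.PosDef)
    (ν νt : Fin n → ℝ) (hν_mono : Monotone ν) (hνt_mono : Monotone νt)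
    (z zt : Fin n → Fin n → ℝ)
    (hz_orth : ∀ i j, z i ⬝ᵥ (B *ᵥ z j) = if i = j then (1 : ℝ) else 0)
    (hz_eig : ∀ k, (A0 - ρ • A1) *ᵥ z k = ν k • (B *ᵥ z k))
    (hzt_orth : ∀ i j, zt i ⬝ᵥ (Bt *ᵥ zt j) = if i = j then (1 : ℝ) else 0)
    (hzt_eig : ∀ k, (At0 - ρ • A1) *ᵥ zt k = νt k • (Bt *ᵥ zt k)) :
    (∀ k, ν k < 0) ∧ (∀ k, νt k < 0) ∧ (∀ k, νt k ≤ ν k) ∧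
    (∀ k, ρ - ρ / (1 - ν k) ≤ ρ - ρ / (1 - νt k)) := by
  set M : Matrix (Fin n) (Fin n) ℝ := A0 - ρ • A1 with hM
  set Mt : Matrix (Fin n) (Fin n) ℝ := At0 - ρ • A1 with hMt
  set D : Matrix (Fin n) (Fin n) ℝ := A0 - At0 with hD
  -- quadratic form facts
  have hMneg : ∀ x : Fin n → ℝ, x ≠ 0 → x ⬝ᵥ (M *ᵥ x) < 0 := by
    intro x hx
    have h1 := h x hx
    have : x ⬝ᵥ (M *ᵥ x) = x ⬝ᵥ (A0 *ᵥ x) - ρ * (x ⬝ᵥ (A1 *ᵥ x)) := by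
      rw [hM, sub_mulVec, dotProduct_sub, smul_mulVec, dotProduct_smul, smul_eq_mul]
    linarith
  have hDpsd : ∀ x : Fin n → ℝ, 0 ≤ x ⬝ᵥ (D *ᵥ x) := by
    intro x
    simpa using hdiff.dotProduct_mulVec_nonneg x
  have hBq : ∀ x : Fin n → ℝ, x ≠ 0 → 0 < x ⬝ᵥ (B *ᵥ x) := by
    intro x hx; simpa using hBpos.dotProduct_mulVec_pos hx
  have hBtq : ∀ x : Fin n → ℝ, x ≠ 0 → 0 < x ⬝ᵥ (Bt *ᵥ x) := by
    intro x hx; simpa using hBtpos.dotProduct_mulVec_pos hx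
  have hMtM : Mt = M - D := by rw [hM, hMt, hD]; abel
  have hBtB : Bt = B - D := by rw [hB, hBt, hD]; abel
  have hMtq : ∀ x : Fin n → ℝ, x ⬝ᵥ (Mt *ᵥ x) = x ⬝ᵥ (M *ᵥ x) - x ⬝ᵥ (D *ᵥ x) := by
    intro x; rw [hMtM, sub_mulVec, dotProduct_sub]
  have hBtBq : ∀ x : Fin n → ℝ, x ⬝ᵥ (Bt *ᵥ x) = x ⬝ᵥ (B *ᵥ x) - x ⬝ᵥ (D *ᵥ x) := by
    intro x; rw [hBtB, sub_mulVec, dotProduct_sub]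
  have hMtneg : ∀ x : Fin n → ℝ, x ≠ 0 → x ⬝ᵥ (Mt *ᵥ x) < 0 := by
    intro x hx
    have := hMneg x hx; have := hDpsd x; rw [hMtq]; linarith
  -- nonzero eigenvectors, negativity of ν
  have hzne : ∀ k, z k ≠ 0 := by
    intro k hk
    have := hz_orth k k
    rw [hk] at this; simp at this
  have hztne : ∀ k, zt k ≠ 0 := by
    intro k hk
    have := hzt_orth k k
    rw [hk] at this; simp at this
  have hνval : ∀ k, z k ⬝ᵥ (M *ᵥ z k) = ν k := by
    intro k
    rw [hz_eig k, dotProduct_smul, hz_orth k k]; simp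
  have hνtval : ∀ k, zt k ⬝ᵥ (Mt *ᵥ zt k) = νt k := by
    intro k
    rw [hzt_eig k, dotProduct_smul, hzt_orth k k]; simp
  have hνneg : ∀ k, ν k < 0 := fun k => (hνval k) ▸ hMneg (z k) (hzne k)
  have hνtneg : ∀ k, νt k < 0 := fun k => (hνtval k) ▸ hMtneg (zt k) (hztne k)
  -- linear independence
  have hzli : LinearIndependent ℝ z := by
    rw [Fintype.linearIndependent_iff]
    intro c hc j
    have key : (∑ i, c i • z i) ⬝ᵥ (B *ᵥ z j) = c j := by
      rw [sum_dot']
      rw [Finset.sum_eq_single j]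
      · rw [smul_dotProduct, hz_orth]; simp
      · intro i _ hi; rw [smul_dotProduct, hz_orth]; simp [hi]
      · simp
    rw [hc] at key; simpa using key.symm
  have hztli : LinearIndependent ℝ zt := by
    rw [Fintype.linearIndependent_iff]
    intro c hc j
    have key : (∑ i, c i • zt i) ⬝ᵥ (Bt *ᵥ zt j) = c j := by
      rw [sum_dot']
      rw [Finset.sum_eq_single j]
      · rw [smul_dotProduct, hzt_orth]; simp
      · intro i _ hi; rw [smul_dotProduct, hzt_orth]; simp [hi]
      · simp
    rw [hc] at key; simpa using key.symm
  -- main comparison νt k ≤ ν k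
  have hcomp : ∀ k, νt k ≤ ν k := by
    intro k
    -- subspaces
    set e1 : Set.Iic k → Fin n := fun i => (i : Fin n) with he1def
    set e2 : Set.Ici k → Fin n := fun i => (i : Fin n) with he2def
    have he1 : Function.Injective e1 := Subtype.val_injective
    have he2 : Function.Injective e2 := Subtype.val_injective
    set V : Submodule ℝ (Fin n → ℝ) := Submodule.span ℝ (Set.range fun i => z (e1 i)) with hV
    set W : Submodule ℝ (Fin n → ℝ) := Submodule.span ℝ (Set.range fun i => zt (e2 i)) with hW
    have hdimV : Module.finrank ℝ V = (k : ℕ) + 1 := by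
      have h1 := finrank_span_eq_card (hzli.comp e1 he1)
      simp only [Function.comp_def] at h1
      rw [hV, h1, Fintype.card_Iic, Fin.card_Iic]
    have hdimW : Module.finrank ℝ W = n - (k : ℕ) := by
      have h1 := finrank_span_eq_card (hztli.comp e2 he2)
      simp only [Function.comp_def] at h1
      rw [hW, h1, Fintype.card_Ici, Fin.card_Ici]
    have hsup : Module.finrank ℝ (V ⊔ W : Submodule ℝ (Fin n → ℝ)) ≤ n := by
      have := Submodule.finrank_le (V ⊔ W : Submodule ℝ (Fin n → ℝ))
      simpa [Module.finrank_fintype_fun_eq_card] using this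
    have hinf : 0 < Module.finrank ℝ (V ⊓ W : Submodule ℝ (Fin n → ℝ)) := by
      have heq := Submodule.finrank_sup_add_finrank_inf_eq V W
      have hk : (k : ℕ) < n := k.isLt
      omega
    -- get a nonzero vector in the intersection
    have : Nontrivial (V ⊓ W : Submodule ℝ (Fin n → ℝ)) :=
      Module.nontrivial_of_finrank_pos hinf
    obtain ⟨x₀, hx₀⟩ := exists_ne (0 : (V ⊓ W : Submodule ℝ (Fin n → ℝ)))
    set x : Fin n → ℝ := (x₀ : Fin n → ℝ) with hxdef
    have hxne : x ≠ 0 := by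
      intro hc
      apply hx₀
      exact Subtype.ext hc
    have hxV : x ∈ V := x₀.2.1
    have hxW : x ∈ W := x₀.2.2
    obtain ⟨c, hc⟩ := (Submodule.mem_span_range_iff_exists_fun ℝ).mp hxV
    obtain ⟨d, hd⟩ := (Submodule.mem_span_range_iff_exists_fun ℝ).mp hxW
    -- quadratic values
    obtain ⟨hBx, hMx⟩ := quad_diag hz_orth hz_eig e1 he1 c
    obtain ⟨hBtx, hMtx⟩ := quad_diag hzt_orth hzt_eig e2 he2 d
    rw [hc] at hBx hMx
    rw [hd] at hBtx hMtx
    -- Rayleigh bounds on the spans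
    have hub : x ⬝ᵥ (M *ᵥ x) ≤ ν k * (x ⬝ᵥ (B *ᵥ x)) := by
      rw [hMx, hBx, Finset.mul_sum]
      refine Finset.sum_le_sum fun i _ => ?_
      exact mul_le_mul_of_nonneg_right (hν_mono i.2) (sq_nonneg _)
    have hlb : νt k * (x ⬝ᵥ (Bt *ᵥ x)) ≤ x ⬝ᵥ (Mt *ᵥ x) := by
      rw [hMtx, hBtx, Finset.mul_sum]
      refine Finset.sum_le_sum fun i _ => ?_
      exact mul_le_mul_of_nonneg_right (hνt_mono i.2) (sq_nonneg _)
    -- pointwise Rayleigh comparison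
    have hm : x ⬝ᵥ (M *ᵥ x) < 0 := hMneg x hxne
    have hb : 0 < x ⬝ᵥ (B *ᵥ x) := hBq x hxne
    have hbt : 0 < x ⬝ᵥ (Bt *ᵥ x) := hBtq x hxne
    have hd0 : 0 ≤ x ⬝ᵥ (D *ᵥ x) := hDpsd x
    have hmt : x ⬝ᵥ (Mt *ᵥ x) = x ⬝ᵥ (M *ᵥ x) - x ⬝ᵥ (D *ᵥ x) := hMtq x
    have hbtb : x ⬝ᵥ (Bt *ᵥ x) = x ⬝ᵥ (B *ᵥ x) - x ⬝ᵥ (D *ᵥ x) := hBtBq x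
    have hmb : (x ⬝ᵥ (Mt *ᵥ x)) * (x ⬝ᵥ (B *ᵥ x)) ≤ (x ⬝ᵥ (M *ᵥ x)) * (x ⬝ᵥ (Bt *ᵥ x)) := by
      nlinarith [mul_nonneg hd0 (by linarith : (0:ℝ) ≤ x ⬝ᵥ (B *ᵥ x) - x ⬝ᵥ (M *ᵥ x))]
    have s1 : νt k ≤ (x ⬝ᵥ (Mt *ᵥ x)) / (x ⬝ᵥ (Bt *ᵥ x)) := (le_div_iff₀ hbt).mpr hlb
    have s2 : (x ⬝ᵥ (Mt *ᵥ x)) / (x ⬝ᵥ (Bt *ᵥ x)) ≤ (x ⬝ᵥ (M *ᵥ x)) / (x ⬝ᵥ (B *ᵥ x)) :=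
      (div_le_div_iff₀ hbt hb).mpr hmb
    have s3 : (x ⬝ᵥ (M *ᵥ x)) / (x ⬝ᵥ (B *ᵥ x)) ≤ ν k := (div_le_iff₀ hb).mpr hub
    linarith
  refine ⟨hνneg, hνtneg, hcomp, fun k => ?_⟩
  have h1 : (0:ℝ) < 1 - ν k := by linarith [hνneg k]
  have h2 : 1 - ν k ≤ 1 - νt k := by linarith [hcomp k]
  have := div_le_div_of_nonneg_left hρ.le h1 h2
  linarith
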